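/- arXiv:0911.2494 — 6 statements merged into one kernel-verified Lean document; each statement's English description precedes it below -/
import Mathlib

section
/- For nonempty A₁, A₂ ⊆ ℕ with minima 𝔪₁, 𝔪₂ and with 𝔪₁ ≤ 𝔪₂, setting 𝔮ᵢ := gcd(Aᵢ − 𝔪ᵢ), the set A₁ ∪ A₂ has gcd(A₁ ∪ A₂ − min(A₁ ∪ A₂)) = gcd(𝔮₁, 𝔮₂, 𝔪₂ − 𝔪₁). -/
/-! Both sides have the same divisors. The union has minimum `𝔪₁`, and a number `d` divides
every `a - 𝔪₁` with `a ∈ A₂` iff it divides `𝔪₂ - 𝔪₁` (take `a = 𝔪₂`) and every `a - 𝔪₂`,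
because `a - 𝔪₁ = (a - 𝔪₂) + (𝔪₂ - 𝔪₁)`. -/

/-- The gcd of a set of naturals: the greatest common divisor
(`0` if the set has no positive common-divisor bound, e.g. `S ⊆ {0}` or `S = ∅`). -/
noncomputable def setGcd (S : Set ℕ) : ℕ := sSup {d : ℕ | ∀ a ∈ S, d ∣ a}

theorem dvd_setGcd_iff {S : Set ℕ} {d : ℕ} : d ∣ setGcd S ↔ ∀ a ∈ S, d ∣ a := by
  by_cases hS : ∀ b ∈ S, b = 0
  · have hD : {e : ℕ | ∀ a ∈ S, e ∣ a} = Set.univ :=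
      Set.eq_univ_of_forall fun e a ha => hS a ha ▸ dvd_zero e
    have h0 : setGcd S = 0 := by
      rw [setGcd, hD, Nat.sSup_of_not_bddAbove not_bddAbove_univ]
    simp only [h0, dvd_zero, true_iff]
    exact fun a ha => hS a ha ▸ dvd_zero d
  · push Not at hS
    obtain ⟨b, hb, hb0⟩ := hS
    have hbdd : BddAbove {e : ℕ | ∀ a ∈ S, e ∣ a} :=
      ⟨b, fun e he => Nat.le_of_dvd (Nat.pos_of_ne_zero hb0) (he b hb)⟩
    have hg : setGcd S ∈ {e : ℕ | ∀ a ∈ S, e ∣ a} :=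
      Nat.sSup_mem ⟨1, fun a _ => one_dvd a⟩ hbdd
    have hg0 : setGcd S ≠ 0 := fun h => hb0 (Nat.eq_zero_of_zero_dvd (h ▸ hg b hb))
    refine ⟨fun hd a ha => hd.trans (hg a ha), fun hd => ?_⟩
    -- `lcm d (setGcd S)` is again a common divisor, so it cannot exceed the greatest one.
    have hlcm : Nat.lcm d (setGcd S) ≤ setGcd S :=
      le_csSup hbdd fun a ha => Nat.lcm_dvd (hd a ha) (hg a ha)
    have hd0 : d ≠ 0 := by rintro rfl; exact hb0 (Nat.eq_zero_of_zero_dvd (hd b hb))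
    rw [← Nat.lcm_eq_right_iff_dvd]
    exact le_antisymm hlcm
      (Nat.le_of_dvd (Nat.pos_of_ne_zero (Nat.lcm_ne_zero hd0 hg0)) (Nat.dvd_lcm_right _ _))

theorem forall_dvd_sub_iff_of_isLeast {A : Set ℕ} {m₁ m₂ d : ℕ} (hA : IsLeast A m₂)
    (hm : m₁ ≤ m₂) :
    (∀ a ∈ A, d ∣ a - m₁) ↔ (∀ a ∈ A, d ∣ a - m₂) ∧ d ∣ m₂ - m₁ := by
  have hsplit : ∀ a ∈ A, a - m₁ = (a - m₂) + (m₂ - m₁) := fun a ha => by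
    have := hA.2 ha; omega
  constructor
  · intro h
    have hδ : d ∣ m₂ - m₁ := by simpa using h m₂ hA.1
    exact ⟨fun a ha => (Nat.dvd_add_left hδ).1 (hsplit a ha ▸ h a ha), hδ⟩
  · rintro ⟨h, hδ⟩ a ha
    rw [hsplit a ha]
    exact dvd_add (h a ha) hδ

theorem gcd_param_union (A₁ A₂ : Set ℕ) (h₁ : A₁.Nonempty) (h₂ : A₂.Nonempty)
    (hm : sInf A₁ ≤ sInf A₂) :
    setGcd ((fun a => a - sInf (A₁ ∪ A₂)) '' (A₁ ∪ A₂)) =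
      Nat.gcd (setGcd ((fun a => a - sInf A₁) '' A₁))
        (Nat.gcd (setGcd ((fun a => a - sInf A₂) '' A₂)) (sInf A₂ - sInf A₁)) := by
  have hU : sInf (A₁ ∪ A₂) = sInf A₁ := by
    rw [csInf_union (OrderBot.bddBelow _) h₁ (OrderBot.bddBelow _) h₂, min_eq_left hm]
  refine eq_of_forall_dvd' fun d => ?_
  simp only [Nat.dvd_gcd_iff, dvd_setGcd_iff, Set.forall_mem_image, hU, Set.mem_union, or_imp,
    forall_and, forall_dvd_sub_iff_of_isLeast (isLeast_csInf h₂) hm]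
end

section
/- If A ⊆ ℕ is infinite and eventually periodic, then 𝔮 divides 𝔭, where 𝔪 = min A, 𝔮 = gcd(A − 𝔪), and 𝔭 is the minimal eventual period; moreover 𝔭 = 𝔮 if and only if 𝔭 divides a − 𝔪 for every a ∈ A. -/
/-- `p` is an eventual period of `A`. -/
def EvPeriodOf (A : Set ℕ) (p : ℕ) : Prop := ∃ m : ℕ, ∀ a ∈ A, m ≤ a → a + p ∈ A

/- The gcd of `{a - m : a ∈ A}` divides every eventual period `p`: for a large `b ∈ A` both
`b - m` and `b + p - m = (b - m) + p` lie in that set. The converse direction of the equivalence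
holds because a positive common divisor of the set is at most its gcd. -/

section SetGcd

variable {S : Set ℕ}

theorem bddAbove_commonDivisors {a : ℕ} (ha : a ∈ S) (ha_pos : 0 < a) :
    BddAbove {d : ℕ | ∀ b ∈ S, d ∣ b} :=
  ⟨a, fun _ hd => Nat.le_of_dvd ha_pos (hd a ha)⟩

theorem setGcd_dvd {a : ℕ} (ha : a ∈ S) (ha_pos : 0 < a) {b : ℕ} (hb : b ∈ S) :
    setGcd S ∣ b :=
  Nat.sSup_mem (s := {d : ℕ | ∀ b ∈ S, d ∣ b}) ⟨1, fun b _ => one_dvd b⟩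
    (bddAbove_commonDivisors ha ha_pos) b hb

theorem le_setGcd {a : ℕ} (ha : a ∈ S) (ha_pos : 0 < a) {d : ℕ} (hd : ∀ b ∈ S, d ∣ b) :
    d ≤ setGcd S :=
  le_csSup (bddAbove_commonDivisors ha ha_pos) hd

end SetGcd

section EventualPeriod

variable {A : Set ℕ}

theorem Set.Infinite.exists_sInf_lt (hA : A.Infinite) : ∃ a ∈ A, sInf A < a := by
  obtain ⟨a, ha, hne⟩ := (hA.sdiff (Set.finite_singleton (sInf A))).nonempty
  exact ⟨a, ha, (Nat.sInf_le ha).lt_of_ne (Ne.symm hne)⟩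

theorem EvPeriodOf.dvd_of_forall_dvd_sub_sInf {p q : ℕ} (hp : EvPeriodOf A p) (hA : A.Infinite)
    (hq : ∀ a ∈ A, q ∣ a - sInf A) : q ∣ p := by
  obtain ⟨M, hM⟩ := hp
  obtain ⟨b, hb, hMb⟩ := (hA.sdiff (Set.finite_Iio M)).nonempty
  have hMb : M ≤ b := not_lt.mp hMb
  have hshift : b + p - sInf A = (b - sInf A) + p := by
    have := Nat.sInf_le hb
    omega
  have hbp := hq _ (hM b hb hMb)
  rw [hshift] at hbp
  exact (Nat.dvd_add_right (hq b hb)).mp hbp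

end EventualPeriod

theorem q_dvd_p (A : Set ℕ) (𝔭 : ℕ)
    (hinf : A.Infinite)
    (hleast : IsLeast {p : ℕ | 0 < p ∧ EvPeriodOf A p} 𝔭) :
    setGcd ((fun a => a - sInf A) '' A) ∣ 𝔭 ∧
    (𝔭 = setGcd ((fun a => a - sInf A) '' A) ↔ ∀ a ∈ A, 𝔭 ∣ a - sInf A) := by
  obtain ⟨hp_pos, hp⟩ := hleast.1
  obtain ⟨a₀, ha₀, hlt⟩ := hinf.exists_sInf_lt
  have ha₀S : a₀ - sInf A ∈ (fun a => a - sInf A) '' A := ⟨a₀, ha₀, rfl⟩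
  have ha₀_pos : 0 < a₀ - sInf A := Nat.sub_pos_of_lt hlt
  have hq : ∀ a ∈ A, setGcd ((fun a => a - sInf A) '' A) ∣ a - sInf A :=
    fun a ha => setGcd_dvd ha₀S ha₀_pos ⟨a, ha, rfl⟩
  have hqp := hp.dvd_of_forall_dvd_sub_sInf hinf hq
  refine ⟨hqp, fun h => h ▸ hq, fun h => ?_⟩
  refine le_antisymm ?_ (Nat.le_of_dvd hp_pos hqp)
  exact le_setGcd ha₀S ha₀_pos (by rintro _ ⟨a, ha, rfl⟩; exact h a ha)
end

section
/- Let A ⊆ ℕ be periodic with minimal eventual period 𝔭 > 0. If the image of A in ℤ/𝔭ℤ is a subgroup of ℤ/𝔭ℤ, then 𝔭 = gcd(A − min A), and for all sufficiently large m, A ∩ [𝔭m, ∞) = 𝔭m + 𝔭·ℕ. -/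
open Filter

section
variable {A : Set ℕ} {p q d : ℕ}

lemma add_mul_mem_of_add_mem {m : ℕ} (h : ∀ a ∈ A, m ≤ a → a + p ∈ A) {a : ℕ} (ha : a ∈ A)
    (hma : m ≤ a) : ∀ k : ℕ, a + k * p ∈ A
  | 0 => by simpa using ha
  | k + 1 => by
    simpa [add_mul, ← add_assoc] using
      h _ (add_mul_mem_of_add_mem h ha hma k) (hma.trans (Nat.le_add_right _ _))

lemma eventually_mem_of_modEq (hp : 0 < p) (hpA : ∀ a ∈ A, a + p ∈ A) (hq : EvPeriodOf A q)
    (hq0 : 0 < q) {a : ℕ} (ha : a ∈ A) : ∀ᶠ n in atTop, n ≡ a [MOD q] → n ∈ A := by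
  obtain ⟨m, hm⟩ := hq
  set b := a + m * q * p
  have hb : b ∈ A := add_mul_mem_of_add_mem (m := 0) (fun a ha _ => hpA a ha) ha a.zero_le _
  have hmb : m ≤ b := calc
    m ≤ m * q := Nat.le_mul_of_pos_right _ hq0
    _ ≤ m * q * p := Nat.le_mul_of_pos_right _ hp
    _ ≤ b := Nat.le_add_left _ _
  have hba : b ≡ a [MOD q] := by simp [b, Nat.ModEq, mul_comm m q, mul_assoc]
  filter_upwards [eventually_ge_atTop b] with n hbn hn
  obtain ⟨k, hk⟩ := (Nat.modEq_iff_dvd' hbn).1 (hba.trans hn.symm)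
  have hn : n = b + k * q := by rw [mul_comm] at hk; omega
  exact hn ▸ add_mul_mem_of_add_mem hm hb hmb k

lemma eventually_mem_iff_cast_mem_image (hp : 0 < p) (hpA : ∀ a ∈ A, a + p ∈ A)
    (hq : EvPeriodOf A q) [NeZero q] :
    ∀ᶠ n in atTop, n ∈ A ↔ (n : ZMod q) ∈ ((Nat.cast : ℕ → ZMod q) '' A) := by
  have hclass : ∀ r : ZMod q, ∀ᶠ n : ℕ in atTop,
      r ∈ ((Nat.cast : ℕ → ZMod q) '' A) → (n : ZMod q) = r → n ∈ A := by
    intro r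
    by_cases hr : r ∈ ((Nat.cast : ℕ → ZMod q) '' A)
    · obtain ⟨a, ha, rfl⟩ := hr
      filter_upwards [eventually_mem_of_modEq hp hpA hq (NeZero.pos q) ha] with n hn _ hna
      exact hn ((ZMod.natCast_eq_natCast_iff _ _ _).1 hna)
    · exact Eventually.of_forall fun _ h => absurd h hr
  filter_upwards [eventually_all.2 hclass] with n hn
  exact ⟨fun h => ⟨n, h, rfl⟩, fun h => hn _ h rfl⟩

variable {H : AddSubmonoid (ZMod q)}

lemma evPeriodOf_of_cast_mem (hp : 0 < p) (hpA : ∀ a ∈ A, a + p ∈ A) (hq : EvPeriodOf A q)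
    [NeZero q] (hH : (Nat.cast : ℕ → ZMod q) '' A = H) {k : ℕ} (hk : (k : ZMod q) ∈ H) :
    EvPeriodOf A k := by
  obtain ⟨N, hN⟩ := eventually_atTop.1 (eventually_mem_iff_cast_mem_image hp hpA hq)
  refine ⟨N, fun a ha hNa => (hN _ (hNa.trans (Nat.le_add_right _ _))).2 ?_⟩
  have haH : (a : ZMod q) ∈ H := by
    rw [← SetLike.mem_coe, ← hH]
    exact Set.mem_image_of_mem _ ha
  rw [hH, Nat.cast_add]
  exact H.add_mem haH hk

lemma dvd_of_mem_of_isLeast (hp : 0 < p) (hpA : ∀ a ∈ A, a + p ∈ A)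
    (hleast : IsLeast {p : ℕ | 0 < p ∧ EvPeriodOf A p} q) (hH : (Nat.cast : ℕ → ZMod q) '' A = H)
    {a : ℕ} (ha : a ∈ A) : q ∣ a := by
  have hq0 := hleast.1.1
  have : NeZero q := ⟨hq0.ne'⟩
  by_contra hqa
  have hrem : 0 < a % q := Nat.pos_of_ne_zero fun h => hqa (Nat.dvd_of_mod_eq_zero h)
  have hremH : ((a % q : ℕ) : ZMod q) ∈ H := by
    rw [ZMod.natCast_mod, ← SetLike.mem_coe, ← hH]
    exact ⟨a, ha, rfl⟩
  have := hleast.2 ⟨hrem, evPeriodOf_of_cast_mem hp hpA hleast.1.2 hH hremH⟩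
  exact (Nat.mod_lt a hq0).not_ge this

lemma eventually_mem_of_dvd (hp : 0 < p) (hpA : ∀ a ∈ A, a + p ∈ A) (hq : EvPeriodOf A q)
    [NeZero q] (hH : (Nat.cast : ℕ → ZMod q) '' A = H) : ∀ᶠ n in atTop, q ∣ n → n ∈ A := by
  filter_upwards [eventually_mem_iff_cast_mem_image hp hpA hq] with n hn
  rintro ⟨k, rfl⟩
  rw [hn, hH]
  simp [H.zero_mem]

lemma setGcd_image_sub_sInf (hd0 : 0 < d) (hdvd : ∀ a ∈ A, d ∣ a)
    (hev : ∀ᶠ n in atTop, d ∣ n → n ∈ A) : setGcd ((fun a => a - sInf A) '' A) = d := by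
  refine IsGreatest.csSup_eq ⟨?_, fun e he => ?_⟩
  · rintro _ ⟨a, ha, rfl⟩
    exact Nat.dvd_sub (hdvd a ha) (hdvd _ (Nat.sInf_mem ⟨a, ha⟩))
  · obtain ⟨N, hN⟩ := eventually_atTop.1 hev
    set n := d * (N + sInf A)
    have hle : N + sInf A ≤ n := Nat.le_mul_of_pos_left _ hd0
    have hn : n ∈ A := hN n (by omega) (dvd_mul_right _ _)
    have hnd : n + d ∈ A := hN _ (by omega) ((dvd_mul_right _ _).add dvd_rfl)
    have hsub : (n + d - sInf A) - (n - sInf A) = d := by omega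
    exact Nat.le_of_dvd hd0 (hsub ▸ Nat.dvd_sub (he _ ⟨_, hnd, rfl⟩) (he _ ⟨_, hn, rfl⟩))

lemma eventually_sep_le_eq (hd0 : 0 < d) (hdvd : ∀ a ∈ A, d ∣ a)
    (hev : ∀ᶠ n in atTop, d ∣ n → n ∈ A) :
    ∀ᶠ m in atTop, {a ∈ A | d * m ≤ a} = {x : ℕ | ∃ n : ℕ, x = d * m + d * n} := by
  obtain ⟨N, hN⟩ := eventually_atTop.1 hev
  filter_upwards [eventually_ge_atTop N] with m hm
  ext x
  constructor
  · rintro ⟨hx, hmx⟩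
    obtain ⟨k, rfl⟩ := hdvd x hx
    exact ⟨k - m, by rw [← mul_add, Nat.add_sub_cancel' (Nat.le_of_mul_le_mul_left hmx hd0)]⟩
  · rintro ⟨n, rfl⟩
    have hN' : N ≤ d * m + d * n :=
      hm.trans ((Nat.le_mul_of_pos_left _ hd0).trans (Nat.le_add_right _ _))
    exact ⟨hN _ hN' (by rw [← mul_add]; exact dvd_mul_right _ _), Nat.le_add_right _ _⟩

end

theorem subgroup_image_case_general (A : Set ℕ) (𝔭 : ℕ)
    (hper : ∃ p > 0, ∀ a ∈ A, a + p ∈ A)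
    (hleast : IsLeast {p : ℕ | 0 < p ∧ EvPeriodOf A p} 𝔭)
    (hsub : ∃ H : AddSubgroup (ZMod 𝔭), (fun n : ℕ => (n : ZMod 𝔭)) '' A = ↑H) :
    𝔭 = setGcd ((fun a => a - sInf A) '' A) ∧
    ∃ M : ℕ, ∀ m : ℕ, M ≤ m →
      {a ∈ A | 𝔭 * m ≤ a} = {x : ℕ | ∃ n : ℕ, x = 𝔭 * m + 𝔭 * n} := by
  obtain ⟨p, hp, hpA⟩ := hper
  obtain ⟨H, hH⟩ := hsub
  have hpos := hleast.1.1
  have : NeZero 𝔭 := ⟨hpos.ne'⟩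
  have hdvd : ∀ a ∈ A, 𝔭 ∣ a :=
    fun _ => dvd_of_mem_of_isLeast (H := H.toAddSubmonoid) hp hpA hleast hH
  have hev := eventually_mem_of_dvd (H := H.toAddSubmonoid) hp hpA hleast.1.2 hH
  exact ⟨(setGcd_image_sub_sInf hpos hdvd hev).symm,
    eventually_atTop.1 (eventually_sep_le_eq hpos hdvd hev)⟩

theorem subgroup_image_case (A : Set ℕ) (𝔭 : ℕ)
    (hper : ∃ p > 0, ∀ a ∈ A, a + p ∈ A)
    (hpos : 0 < 𝔭)
    (hleast : IsLeast {p : ℕ | 0 < p ∧ EvPeriodOf A p} 𝔭)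
    (hsub : ∃ H : AddSubgroup (ZMod 𝔭), (fun n : ℕ => (n : ZMod 𝔭)) '' A = ↑H) :
    𝔭 = setGcd ((fun a => a - sInf A) '' A) ∧
    ∃ M : ℕ, ∀ m : ℕ, M ≤ m →
      {a ∈ A | 𝔭 * m ≤ a} = {x : ℕ | ∃ n : ℕ, x = 𝔭 * m + 𝔭 * n} :=
  subgroup_image_case_general A 𝔭 hper hleast hsub
end

section
/- Suppose A ⊆ ℕ contains a positive element and there exist integers r ≥ 0 and s ≥ 2 such that A ⊇ r + s ⋆ A (where s ⋆ A is the s-fold sumset of A). Then A is periodic, its minimal eventual period 𝔭 equals 𝔮 := gcd(A − min A), and there exists c such that A = (A ∩ [0, c)) ∪ (c + 𝔭·ℕ); in particular A is the union of a finite set with a single arithmetical progression. -/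
/-!
Write `P` for the additive monoid of periods of `A` and `m = min A`. Since
`x + a + (s - 2) m ∈ s ⋆ A` for `x, a ∈ A`, every `r + (s - 2) m + a` with `a ∈ A` lies in `P`;
differences of these give `gcd P ∣ a - m`, while `m + p ∈ A` for `p ∈ P` gives the converse, so
`gcd P = gcd (A - m) =: 𝔮`. As a submonoid of `ℕ`, `P` contains every large multiple of `𝔮`
(Frobenius), so `A` agrees with `m + 𝔮ℕ` from some point on, which yields all three claims.
-/

open Pointwise

/-- `n ⋆ B`: the `n`-fold sumset of `B`, with `0 ⋆ B = {0}`. -/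
def nstar : ℕ → Set ℕ → Set ℕ
  | 0, _ => {0}
  | n + 1, B => B + nstar n B

/-- `A` is periodic. -/
def SetPeriodic (A : Set ℕ) : Prop := ∃ p > 0, ∀ a ∈ A, a + p ∈ A

theorem setGcd_eq_natSetGcd (S : Set ℕ) : setGcd S = Nat.setGcd S := by
  have hdvd : {d : ℕ | ∀ a ∈ S, d ∣ a} = {d | d ∣ Nat.setGcd S} := by
    ext d
    exact Nat.dvd_setGcd_iff.symm
  rw [setGcd, hdvd]
  rcases (Nat.setGcd S).eq_zero_or_pos with h | h
  · rw [h]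
    simp only [Nat.dvd_zero, Set.ofPred_true]
    exact Nat.sSup_of_not_bddAbove not_bddAbove_univ
  · exact IsGreatest.csSup_eq ⟨dvd_rfl, fun d hd => Nat.le_of_dvd h hd⟩

theorem AddSubmonoid.exists_setGcd_mul_mem (M : AddSubmonoid ℕ) :
    ∃ N, ∀ n ≥ N, Nat.setGcd M * n ∈ M := by
  obtain ⟨N, hN⟩ := Nat.exists_mem_closure_of_ge (M : Set ℕ)
  refine ⟨N, fun n hn => ?_⟩
  rcases (Nat.setGcd M).eq_zero_or_pos with h | h
  · simp [h, zero_mem]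
  · exact M.closure_eq.le <| hN _ (hn.trans (Nat.le_mul_of_pos_left n h)) (dvd_mul_right _ _)

theorem mul_mem_nstar {A : Set ℕ} {a : ℕ} (ha : a ∈ A) : ∀ n, n * a ∈ nstar n A
  | 0 => by simp [nstar]
  | n + 1 => by
    rw [add_one_mul, add_comm (n * a)]
    exact Set.add_mem_add ha (mul_mem_nstar ha n)

def periods (A : Set ℕ) : AddSubmonoid ℕ where
  carrier := {p | ∀ x ∈ A, x + p ∈ A}
  zero_mem' := fun _ hx => hx
  add_mem' := fun hp hq x hx => by
    rw [← add_assoc]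
    exact hq _ (hp x hx)

theorem add_mul_add_mem_periods {A : Set ℕ} {r k : ℕ} (hsup : ∀ x ∈ nstar (k + 2) A, r + x ∈ A)
    {a b : ℕ} (ha : a ∈ A) (hb : b ∈ A) : r + k * b + a ∈ periods A := by
  intro x hx
  have hmem : x + (a + k * b) ∈ nstar (k + 2) A :=
    Set.add_mem_add hx (Set.add_mem_add ha (mul_mem_nstar hb k))
  convert hsup _ hmem using 1
  ring

theorem setGcd_periods_eq {A : Set ℕ} {m c : ℕ} (hm : m ∈ A) (hc : ∀ a ∈ A, c + a ∈ periods A) :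
    Nat.setGcd (periods A) = Nat.setGcd ((fun a => a - m) '' A) := by
  apply Nat.dvd_antisymm
  · refine Nat.dvd_setGcd_iff.mpr ?_
    rintro _ ⟨a, ha, rfl⟩
    show _ ∣ a - m
    rw [← Nat.add_sub_add_left c a m]
    exact Nat.dvd_sub (Nat.setGcd_dvd_of_mem (hc a ha)) (Nat.setGcd_dvd_of_mem (hc m hm))
  · refine Nat.setGcd_mono fun p hp => ⟨m + p, hp m hm, ?_⟩
    simp

theorem mem_iff_of_le {A : Set ℕ} {m q N : ℕ} (hm : m ∈ A) (hdvd : ∀ a ∈ A, q ∣ a - m)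
    (hN : ∀ n ≥ N, q * n ∈ periods A) {x : ℕ} (hx : m + q * N ≤ x) :
    x ∈ A ↔ ∃ n, x = m + q * N + q * n := by
  constructor
  · intro hxA
    obtain ⟨n, hn⟩ := Nat.dvd_sub (hdvd x hxA) (dvd_mul_right q N)
    exact ⟨n, by omega⟩
  · rintro ⟨n, rfl⟩
    rw [add_assoc, ← mul_add]
    exact hN _ le_self_add m hm

section EventuallyProgression

variable {A : Set ℕ} {c q : ℕ}

theorem isLeast_evPeriodOf (h : ∀ x, c ≤ x → (x ∈ A ↔ ∃ n, x = c + q * n)) (hq : 0 < q) :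
    IsLeast {p | 0 < p ∧ EvPeriodOf A p} q := by
  refine ⟨⟨hq, c, fun a ha hca => ?_⟩, ?_⟩
  · obtain ⟨n, rfl⟩ := (h a hca).1 ha
    exact (h _ (by omega)).2 ⟨n + 1, by ring⟩
  · rintro p ⟨hp, m, hm⟩
    have hxA : c + q * m ∈ A := (h _ le_self_add).2 ⟨m, rfl⟩
    have hmx : m ≤ c + q * m := (Nat.le_mul_of_pos_left m hq).trans le_add_self
    obtain ⟨n, hn⟩ := (h _ (by omega)).1 (hm _ hxA hmx)
    exact Nat.le_of_dvd hp ((Nat.dvd_add_right (dvd_mul_right q m)).mp ⟨n, by omega⟩)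

theorem eq_inter_Iio_union (h : ∀ x, c ≤ x → (x ∈ A ↔ ∃ n, x = c + q * n)) :
    A = A ∩ Set.Iio c ∪ {x | ∃ n, x = c + q * n} := by
  ext x
  rcases lt_or_ge x c with hx | hx
  · have hprog : ¬ ∃ n, x = c + q * n := by
      rintro ⟨n, rfl⟩
      omega
    simp [hx, hprog]
  · simp [not_lt.2 hx, ← h x hx]

end EventuallyProgression

theorem doubling_lemma (A : Set ℕ) (r s : ℕ)
    (hA : ∃ a ∈ A, 0 < a) (hs : 2 ≤ s)
    (hsup : ∀ x ∈ nstar s A, r + x ∈ A) :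
    SetPeriodic A ∧
    IsLeast {p : ℕ | 0 < p ∧ EvPeriodOf A p} (setGcd ((fun a => a - sInf A) '' A)) ∧
    ∃ c : ℕ, A = (A ∩ Set.Iio c) ∪
      {x : ℕ | ∃ n : ℕ, x = c + setGcd ((fun a => a - sInf A) '' A) * n} := by
  obtain ⟨a₀, ha₀, ha₀pos⟩ := hA
  obtain ⟨k, rfl⟩ : ∃ k, s = k + 2 := ⟨s - 2, by omega⟩
  set m := sInf A
  have hm : m ∈ A := Nat.sInf_mem ⟨a₀, ha₀⟩
  have hper : ∀ a ∈ A, r + k * m + a ∈ periods A := fun a ha =>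
    add_mul_add_mem_periods hsup ha hm
  have hq : setGcd ((fun a => a - m) '' A) = Nat.setGcd (periods A) := by
    rw [setGcd_eq_natSetGcd, setGcd_periods_eq hm hper]
  rw [hq]
  have hqpos : 0 < Nat.setGcd (periods A) :=
    Nat.pos_of_dvd_of_pos (Nat.setGcd_dvd_of_mem (hper a₀ ha₀)) (by omega)
  have hdvd : ∀ a ∈ A, Nat.setGcd (periods A) ∣ a - m := fun a ha => by
    rw [setGcd_periods_eq hm hper]
    exact Nat.setGcd_dvd_of_mem ⟨a, ha, rfl⟩
  obtain ⟨N, hN⟩ := (periods A).exists_setGcd_mul_mem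
  have htail := fun x => mem_iff_of_le (x := x) hm hdvd hN
  exact ⟨⟨_, by omega, hper a₀ ha₀⟩, isLeast_evPeriodOf htail hqpos, _, eq_inter_Iio_union htail⟩
end

section
/- Let Γ : (𝒫(ℕ))^k → (𝒫(ℕ))^k be of the form Γᵢ(Y) = ⋃_{u} (Γ_{i,u} + u ⋆ Y) with each Γ_{i,u} ⊆ ℕ, mapping k-tuples of subsets of the positive integers into k-tuples of subsets of the positive integers (equivalently 0 ∉ Γ_{i,0} for all i). Then for the increasing sequence Γ⁽ⁿ⁾(∅,…,∅), the i-th component Γᵢ⁽ⁿ⁾(∅,…,∅) is empty for some (equivalently all) n ≥ k if and only if it is empty for n = k; i.e., the set of indices i with empty i-th component stabilizes by step k. -/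
/-!
Whether `Γᵢ(Y)` is empty depends only on which components of `Y` are empty, since a sumset is
empty iff some summand is, and `0 ⋆ B = {0}` is never empty. So the sets
`Sₙ = {i | Γᵢ⁽ⁿ⁾(∅) ≠ ∅}` satisfy `Sₙ₊₁ = F(Sₙ)` for a monotone `F`, and they increase from
`S₀ = ∅`. Such a chain in `Fin k` can grow strictly at most `k` times, and once two consecutive
terms agree it is constant.
-/

open Pointwise

/-- The set-operator `Γ` determined by the family of coefficient sets `G i u`:
`Γᵢ(Y) = ⋃_{u ∈ ℕᵏ} (G i u + u₁ ⋆ Y₁ + ⋯ + u_k ⋆ Y_k)`. -/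
def GammaOp {k : ℕ} (G : Fin k → (Fin k → ℕ) → Set ℕ)
    (Y : Fin k → Set ℕ) : Fin k → Set ℕ :=
  fun i => ⋃ u : Fin k → ℕ, (G i u + ∑ j : Fin k, nstar (u j) (Y j))

theorem Set.fintype_sum_nonempty_iff {ι α : Type*} [Fintype ι] [AddCommMonoid α]
    (f : ι → Set α) : (∑ i, f i).Nonempty ↔ ∀ i, (f i).Nonempty := by
  simp only [Set.Nonempty, Set.mem_fintype_sum]
  constructor
  · rintro ⟨-, g, hg, -⟩ i
    exact ⟨g i, hg i⟩
  · intro h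
    choose g hg using h
    exact ⟨_, g, hg, rfl⟩

theorem nstar_nonempty_iff (n : ℕ) (B : Set ℕ) : (nstar n B).Nonempty ↔ n = 0 ∨ B.Nonempty := by
  induction n with
  | zero => simp [nstar]
  | succ n ih =>
    rw [nstar, Set.add_nonempty, ih]
    tauto

theorem gammaOp_nonempty_iff {k : ℕ} (G : Fin k → (Fin k → ℕ) → Set ℕ) (Y : Fin k → Set ℕ)
    (i : Fin k) :
    (GammaOp G Y i).Nonempty ↔ ∃ u, (G i u).Nonempty ∧ ∀ j, u j ≠ 0 → (Y j).Nonempty := by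
  simp only [GammaOp, Set.nonempty_iUnion, Set.add_nonempty, Set.fintype_sum_nonempty_iff,
    nstar_nonempty_iff, or_iff_not_imp_left]

open Classical in
noncomputable def nonemptyIndices {k : ℕ} (Y : Fin k → Set ℕ) : Finset (Fin k) :=
  {i | (Y i).Nonempty}

theorem mem_nonemptyIndices {k : ℕ} {Y : Fin k → Set ℕ} {i : Fin k} :
    i ∈ nonemptyIndices Y ↔ (Y i).Nonempty := by
  simp [nonemptyIndices]

theorem nonemptyIndices_gammaOp_mono {k : ℕ} (G : Fin k → (Fin k → ℕ) → Set ℕ)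
    {Y Y' : Fin k → Set ℕ} (h : nonemptyIndices Y ⊆ nonemptyIndices Y') :
    nonemptyIndices (GammaOp G Y) ⊆ nonemptyIndices (GammaOp G Y') := by
  intro i
  simp only [mem_nonemptyIndices, gammaOp_nonempty_iff]
  rintro ⟨u, hG, hY⟩
  exact ⟨u, hG, fun j hj => mem_nonemptyIndices.1 (h (mem_nonemptyIndices.2 (hY j hj)))⟩

section FinsetChain

variable {α : Type*} {S : ℕ → Finset α}

theorem Finset.chain_eq_of_succ_eq (hstep : ∀ m n, S m = S n → S (m + 1) = S (n + 1))
    {m : ℕ} (hm : S m = S (m + 1)) : ∀ n, m ≤ n → S n = S m := by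
  intro n hn
  induction n, hn using Nat.le_induction with
  | base => rfl
  | succ n _ ih => rw [hstep n m ih, ← hm]

theorem Finset.le_card_of_chain_ssubset {n : ℕ} (hS : ∀ m < n, S m ⊂ S (m + 1)) :
    n ≤ (S n).card := by
  induction n with
  | zero => exact Nat.zero_le _
  | succ n ih =>
    have hlt := Finset.card_lt_card (hS n n.lt_succ_self)
    have := ih fun m hm => hS m (hm.trans n.lt_succ_self)
    omega

theorem Finset.chain_stabilizes [Fintype α] (hS : Monotone S)
    (hstep : ∀ m n, S m = S n → S (m + 1) = S (n + 1)) :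
    ∀ n, Fintype.card α ≤ n → S n = S (Fintype.card α) := by
  refine Finset.chain_eq_of_succ_eq hstep ?_
  by_contra hne
  -- a repetition at any `m ≤ card α` would propagate to `card α`
  have hssubset : ∀ m < Fintype.card α + 1, S m ⊂ S (m + 1) := fun m hm =>
    (hS m.le_succ).ssubset_of_ne fun heq =>
      hne ((Finset.chain_eq_of_succ_eq hstep heq _ (by omega)).trans
        (Finset.chain_eq_of_succ_eq hstep heq _ (by omega)).symm)
  have := Finset.le_card_of_chain_ssubset hssubset
  have := Finset.card_le_univ (S (Fintype.card α + 1))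
  omega

end FinsetChain

theorem empty_components_stabilize_general (k : ℕ) (G : Fin k → (Fin k → ℕ) → Set ℕ) :
    ∀ n, k ≤ n → ∀ i : Fin k,
      ((GammaOp G)^[n] (fun _ => (∅ : Set ℕ)) i = ∅ ↔
        (GammaOp G)^[k] (fun _ => (∅ : Set ℕ)) i = ∅) := by
  set S : ℕ → Finset (Fin k) := fun n => nonemptyIndices ((GammaOp G)^[n] fun _ => ∅)
  have hsucc : ∀ n, S (n + 1) = nonemptyIndices (GammaOp G ((GammaOp G)^[n] fun _ => ∅)) :=
    fun n => by simp only [S, Function.iterate_succ_apply']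
  have hstep : ∀ m n, S m ⊆ S n → S (m + 1) ⊆ S (n + 1) := fun m n h => by
    rw [hsucc, hsucc]
    exact nonemptyIndices_gammaOp_mono G h
  have hmono : Monotone S := monotone_nat_of_le_succ fun n => by
    induction n with
    | zero => simp [S, nonemptyIndices]
    | succ n ih => exact hstep n (n + 1) ih
  have hstable := Finset.chain_stabilizes hmono fun m n h =>
    (hstep m n h.subset).antisymm (hstep n m h.symm.subset)
  intro n hn i
  simpa only [S, Fintype.card_fin, mem_nonemptyIndices, Set.not_nonempty_iff_eq_empty]
    using (Finset.ext_iff.1 (hstable n (by simpa using hn)) i).not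

/-- The empty components of the iterates `Γ⁽ⁿ⁾(∅,…,∅)` stabilize by step `k`,
assuming `Γ` maps tuples of subsets of `ℙ` to tuples of subsets of `ℙ`
(equivalently `0 ∉ G i 0`). -/
theorem empty_components_stabilize (k : ℕ) (G : Fin k → (Fin k → ℕ) → Set ℕ)
    (h0 : ∀ i, 0 ∉ G i (fun _ => 0)) :
    ∀ n, k ≤ n → ∀ i : Fin k,
      ((GammaOp G)^[n] (fun _ => (∅ : Set ℕ)) i = ∅ ↔
        (GammaOp G)^[k] (fun _ => (∅ : Set ℕ)) i = ∅) :=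
  empty_components_stabilize_general k G
end

section
/- Let Γ ∈ Γ𝖣𝗈𝗆₀ (a monotone set-operator of the form Γᵢ(Y) = ⋃_u Γ_{i,u} + u ⋆ Y preserving tuples of subsets of positive integers), and let A ≤ Γ(A) componentwise with each Aᵢ ⊆ ℙ. Then the componentwise minimum of ⋃_{n≥0} Γ⁽ⁿ⁾(A) equals the componentwise minimum of Γ⁽ᵏ⁾(A), where k is the number of components (minimum of ∅ taken as +∞). -/
open Pointwise

/-- Minimum of a set of naturals, taken in `ℕ∞` so that `min ∅ = ∞`. -/
noncomputable def minW (S : Set ℕ) : ℕ∞ := sInf ((fun n : ℕ => (n : ℕ∞)) '' S)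

/-!
Taking minima turns sumsets into sums and unions into infima, so `i ↦ minW (Γ⁽ⁿ⁾(A) i)` is the
`n`-th iterate of the min-plus (Bellman–Ford) operator `minPlusStep c x i = ⨅ u, c i u + ∑ⱼ uⱼ xⱼ`
with `c i u = min Γ_{i,u}`, started at a point `x` with `minPlusStep c x ≤ x`. The iterates
decrease to a limit `μ`, which is attained and satisfies `μ ≤ minPlusStep c μ`. If component `i`
first reaches `μ i` at time `s + 2`, then a minimising `u` at that step only charges components
already equal to `μ` at time `s + 1` (otherwise `μ i ≤ minPlusStep c μ i` would fail strictly),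
and one of them must have settled exactly at time `s + 1`, since otherwise `i` would have settled
a step earlier. Hence the settling times fill an interval `1, …, t`, so none exceeds the number
`k` of components.
-/

section MinPlus

variable {ι : Type*} [Fintype ι]

noncomputable def minPlusStep (c : ι → (ι → ℕ) → ℕ∞) (x : ι → ℕ∞) (i : ι) : ℕ∞ :=
  ⨅ u : ι → ℕ, c i u + ∑ j, (u j : ℕ∞) * x j

lemma minPlusStep_mono (c : ι → (ι → ℕ) → ℕ∞) : Monotone (minPlusStep c) :=
  fun _ _ hxy _ => iInf_mono fun _ => by gcongr with j; exact hxy j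

lemma exists_add_sum_mul_eq_minPlusStep (c : ι → (ι → ℕ) → ℕ∞) (x : ι → ℕ∞) (i : ι) :
    ∃ u : ι → ℕ, c i u + ∑ j, (u j : ℕ∞) * x j = minPlusStep c x i :=
  ciInf_mem _

lemma add_sum_mul_lt_add_sum_mul (a : ℕ∞) (u : ι → ℕ) {x y : ι → ℕ∞} (hxy : x ≤ y) {j : ι}
    (hj : u j ≠ 0) (hlt : x j < y j) (hfin : a + ∑ i, (u i : ℕ∞) * x i ≠ ⊤) :
    a + ∑ i, (u i : ℕ∞) * x i < a + ∑ i, (u i : ℕ∞) * y i := by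
  classical
  simp only [← Finset.add_sum_erase _ _ (Finset.mem_univ j), add_left_comm a] at hfin ⊢
  rw [add_comm, add_comm _ (a + _)]
  refine ENat.add_lt_add_of_le_of_lt (WithTop.add_ne_top.1 hfin).2
    (by gcongr with i; exact hxy i) ?_
  have hpos : (0 : ℕ∞) < u j := by positivity
  exact WithTop.mul_right_strictMono hpos (ENat.natCast_ne_top _) hlt

variable {c : ι → (ι → ℕ) → ℕ∞} {x : ι → ℕ∞}

lemma antitone_minPlusStep_iterate (hx : minPlusStep c x ≤ x) :
    Antitone fun n => (minPlusStep c)^[n] x :=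
  (minPlusStep_mono c).antitone_iterate_of_map_le hx

lemma exists_minPlusStep_iterate_eq_iInf (hx : minPlusStep c x ≤ x) :
    ∃ N, (minPlusStep c)^[N] x = ⨅ n, (minPlusStep c)^[n] x := by
  choose N hN using fun j => ciInf_mem fun n => ((minPlusStep c)^[n] x j : ℕ∞)
  refine ⟨Finset.univ.sup N, funext fun j => ?_⟩
  rw [iInf_apply]
  refine le_antisymm ?_ (iInf_le _ _)
  exact (antitone_minPlusStep_iterate hx (Finset.le_sup (Finset.mem_univ j)) j).trans_eq (hN j)

lemma iInf_minPlusStep_iterate_le (hx : minPlusStep c x ≤ x) :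
    ⨅ n, (minPlusStep c)^[n] x ≤ minPlusStep c (⨅ n, (minPlusStep c)^[n] x) := by
  obtain ⟨N, hN⟩ := exists_minPlusStep_iterate_eq_iInf hx
  have hle := iInf_le (fun n => (minPlusStep c)^[n] x) (N + 1)
  rwa [Function.iterate_succ_apply', hN] at hle

variable (c x) in
noncomputable def settleTime (j : ι) : ℕ :=
  sInf {n | (minPlusStep c)^[n] x j = (⨅ m, (minPlusStep c)^[m] x) j}

lemma minPlusStep_iterate_eq_iInf_iff (hx : minPlusStep c x ≤ x) {n : ℕ} {j : ι} :
    (minPlusStep c)^[n] x j = (⨅ m, (minPlusStep c)^[m] x) j ↔ settleTime c x j ≤ n := by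
  refine ⟨fun h => Nat.sInf_le h, fun h => ?_⟩
  refine le_antisymm ?_ (iInf_le (fun m => (minPlusStep c)^[m] x) n j)
  obtain ⟨N, hN⟩ := exists_minPlusStep_iterate_eq_iInf hx
  have hsettled : settleTime c x j ∈ _ := Nat.sInf_mem ⟨N, congrFun hN j⟩
  exact (antitone_minPlusStep_iterate hx h j).trans_eq hsettled

lemma exists_settleTime_eq_of_settleTime_eq_add_two (hx : minPlusStep c x ≤ x) {i : ι} {s : ℕ}
    (hi : settleTime c x i = s + 2) : ∃ j, settleTime c x j = s + 1 := by
  set m := fun n => (minPlusStep c)^[n] x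
  set μ := ⨅ n, m n
  have hμ : ∀ n j, m n j = μ j ↔ settleTime c x j ≤ n := fun _ _ =>
    minPlusStep_iterate_eq_iInf_iff hx
  have hμle : ∀ n, μ ≤ m n := iInf_le m
  have hstep : ∀ n, m (n + 1) = minPlusStep c (m n) := fun n => Function.iterate_succ_apply' ..
  obtain ⟨u, hu⟩ := exists_add_sum_mul_eq_minPlusStep c (m (s + 1)) i
  have hsettled : m (s + 2) i = μ i := (hμ _ _).2 hi.le
  have hunsettled : m (s + 1) i ≠ μ i := fun h => by have := (hμ _ _).1 h; omega
  have hfin : μ i ≠ ⊤ := fun h => hunsettled (by rw [h]; exact top_unique (h ▸ hμle _ i))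
  have hsupport : ∀ j, u j ≠ 0 → m (s + 1) j = μ j := by
    intro j hj
    by_contra hne
    have hmin : c i u + ∑ j, (u j : ℕ∞) * m (s + 1) j = μ i := by rw [hu, ← hstep, hsettled]
    have hlt := add_sum_mul_lt_add_sum_mul (c i u) u (hμle (s + 1)) hj
      (lt_of_le_of_ne (hμle _ j) (Ne.symm hne))
      (ne_top_of_le_ne_top (hmin ▸ hfin) (by gcongr with j; exact hμle _ j))
    exact (hlt.trans_eq hmin).not_ge ((iInf_minPlusStep_iterate_le hx i).trans (iInf_le _ u))
  by_contra! hnone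
  refine hunsettled (le_antisymm ?_ (hμle _ i))
  calc m (s + 1) i = minPlusStep c (m s) i := congrFun (hstep s) i
    _ ≤ c i u + ∑ j, (u j : ℕ∞) * m s j := iInf_le _ u
    _ = c i u + ∑ j, (u j : ℕ∞) * m (s + 1) j := by
      congr 1
      refine Finset.sum_congr rfl fun j _ => ?_
      rcases eq_or_ne (u j) 0 with hj | hj
      · simp [hj]
      have hj_settled : settleTime c x j ≤ s := by
        have := (hμ _ _).1 (hsupport j hj); have := hnone j; omega
      rw [hsupport j hj, (hμ s j).2 hj_settled]
    _ = μ i := by rw [hu, ← hstep, hsettled]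

lemma exists_settleTime_eq_of_le (hx : minPlusStep c x ≤ x) {i : ι} {t : ℕ} (ht : 1 ≤ t)
    (hti : t ≤ settleTime c x i) : ∃ j, settleTime c x j = t := by
  obtain ⟨d, hd⟩ := Nat.exists_eq_add_of_le hti
  induction d generalizing i with
  | zero => exact ⟨i, hd⟩
  | succ d ih =>
    obtain ⟨j, hj⟩ :=
      exists_settleTime_eq_of_settleTime_eq_add_two hx (i := i) (s := t + d - 1) (by omega)
    exact ih (i := j) (by omega) (by omega)

lemma settleTime_le_card (hx : minPlusStep c x ≤ x) (i : ι) :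
    settleTime c x i ≤ Fintype.card ι := by
  have hsub : Finset.Icc 1 (settleTime c x i) ⊆ Finset.univ.image (settleTime c x) :=
    fun t ht => by
      obtain ⟨ht1, hti⟩ := Finset.mem_Icc.1 ht
      simpa using exists_settleTime_eq_of_le hx ht1 hti
  simpa using (Finset.card_le_card hsub).trans Finset.card_image_le

theorem minPlusStep_iterate_card_eq_iInf (hx : minPlusStep c x ≤ x) :
    (minPlusStep c)^[Fintype.card ι] x = ⨅ n, (minPlusStep c)^[n] x :=
  funext fun i => (minPlusStep_iterate_eq_iInf_iff hx).2 (settleTime_le_card hx i)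

end MinPlus

lemma minW_eq_iInf (S : Set ℕ) : minW S = ⨅ a ∈ S, (a : ℕ∞) :=
  sInf_image

lemma minW_le {S : Set ℕ} {a : ℕ} (ha : a ∈ S) : minW S ≤ a :=
  sInf_le ⟨a, ha, rfl⟩

lemma le_minW {S : Set ℕ} {b : ℕ∞} (h : ∀ a ∈ S, b ≤ a) : b ≤ minW S :=
  le_sInf <| Set.forall_mem_image.2 h

lemma minW_mono {S T : Set ℕ} (h : S ⊆ T) : minW T ≤ minW S :=
  sInf_le_sInf (Set.image_mono h)

lemma minW_iUnion {α : Sort*} (S : α → Set ℕ) : minW (⋃ a, S a) = ⨅ a, minW (S a) := by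
  simp only [minW_eq_iInf, iInf_iUnion]

lemma minW_add (S T : Set ℕ) : minW (S + T) = minW S + minW T := by
  refine le_antisymm ?_ (le_minW ?_)
  · rw [minW_eq_iInf S, minW_eq_iInf T]
    exact ENat.le_iInf₂_add_iInf₂ fun a ha b hb => by exact_mod_cast minW_le (Set.add_mem_add ha hb)
  · rintro _ ⟨a, ha, b, hb, rfl⟩
    push_cast
    exact add_le_add (minW_le ha) (minW_le hb)

lemma minW_zero : minW 0 = 0 := by simp [minW]

noncomputable def minWAddMonoidHom : Set ℕ →+ ℕ∞ where
  toFun := minW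
  map_zero' := minW_zero
  map_add' := minW_add

lemma minW_sum {α : Type*} (s : Finset α) (S : α → Set ℕ) :
    minW (∑ a ∈ s, S a) = ∑ a ∈ s, minW (S a) :=
  map_sum minWAddMonoidHom S s

lemma minW_nstar (n : ℕ) (B : Set ℕ) : minW (nstar n B) = n * minW B := by
  induction n with
  | zero => rw [Nat.cast_zero, zero_mul]; exact minW_zero
  | succ n ih => rw [nstar, minW_add, ih]; push_cast; ring

lemma minW_gammaOp {k : ℕ} (G : Fin k → (Fin k → ℕ) → Set ℕ) (Y : Fin k → Set ℕ) (i : Fin k) :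
    minW (GammaOp G Y i) = minPlusStep (fun i u => minW (G i u)) (fun j => minW (Y j)) i := by
  simp only [GammaOp, minPlusStep, minW_iUnion, minW_add, minW_sum, minW_nstar]

lemma minW_iterate_gammaOp {k : ℕ} (G : Fin k → (Fin k → ℕ) → Set ℕ) (n : ℕ)
    (A : Fin k → Set ℕ) (i : Fin k) :
    minW ((GammaOp G)^[n] A i) =
      (minPlusStep (fun i u => minW (G i u)))^[n] (fun j => minW (A j)) i := by
  have hsemiconj : Function.Semiconj (fun Y j => minW (Y j)) (GammaOp G)
      (minPlusStep fun i u => minW (G i u)) := fun Y => funext (minW_gammaOp G Y)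
  exact congrFun (hsemiconj.iterate_right n A) i

theorem min_stabilizes_general (k : ℕ) (G : Fin k → (Fin k → ℕ) → Set ℕ)
    (A : Fin k → Set ℕ)
    (hA : ∀ i, A i ⊆ GammaOp G A i) :
    ∀ i : Fin k,
      minW (⋃ n : ℕ, (GammaOp G)^[n] A i) = minW ((GammaOp G)^[k] A i) := by
  intro i
  have hx : minPlusStep (fun i u => minW (G i u)) (fun j => minW (A j)) ≤ fun j => minW (A j) :=
    fun j => minW_gammaOp G A j ▸ minW_mono (hA j)
  have hstable := congrFun (minPlusStep_iterate_card_eq_iInf hx) i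
  rw [Fintype.card_fin, iInf_apply] at hstable
  simp only [minW_iUnion, minW_iterate_gammaOp, hstable]

theorem min_stabilizes (k : ℕ) (G : Fin k → (Fin k → ℕ) → Set ℕ)
    (h0 : ∀ i, 0 ∉ G i (fun _ => 0))
    (A : Fin k → Set ℕ) (hApos : ∀ i, ∀ a ∈ A i, 0 < a)
    (hA : ∀ i, A i ⊆ GammaOp G A i) :
    ∀ i : Fin k,
      minW (⋃ n : ℕ, (GammaOp G)^[n] A i) = minW ((GammaOp G)^[k] A i) :=
  min_stabilizes_general k G A hA
end
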